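/- Let n ≥ 0, and let s and i be integers with i ≥ s ≥ 0 and i ≡ s (mod 2). Then the number of lattice paths P of length n with P ≥ 0 and h(P) = i equals the number of lattice paths P of length n with h(P) = s whose minimum height, min over 0 ≤ a ≤ n of h_a(P), equals −(i − s)/2. -/

import Mathlib

/-- A lattice path of length `n`: each step is `+1` (U) or `-1` (D). -/
def IsPath {n : ℕ} (P : Fin n → ℤ) : Prop := ∀ l, P l = 1 ∨ P l = -1

/-- Height of the path `P` at `x = a`: sum of the first `a` steps. -/
def ht {n : ℕ} (P : Fin n → ℤ) (a : ℕ) : ℤ :=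
  ∑ l ∈ Finset.univ.filter (fun l : Fin n => (l : ℕ) < a), P l

/-- The minimum height of a path over `0 ≤ a ≤ n`. -/
def minHt {n : ℕ} (P : Fin n → ℤ) : ℤ :=
  (Finset.range (n + 1)).inf' Finset.nonempty_range_add_one (fun a => ht P a)

/-!
Write `F n i` for the number of paths `P ≥ 0` of length `n` ending at `i`, and `G n s m` for the
number of paths of length `n` ending at `s` with minimum height `m`. Removing the last step gives
`F (n+1) i = F n (i-1) + F n (i+1)` for `i ≥ 0`, and `G (n+1) s m = G n (s-1) m + G n (s+1) m` for
`m < s`; when `s = m` the minimum is attained at the end, so the last step is down and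
`G (n+1) m m = G n (m+1) m + G n (m+1) (m+1)`. These are the same recurrence under
`i = s - 2m`, so `F n (s - 2m) = G n s m` for `m ≤ 0`, `m ≤ s` by induction on `n`.
-/

lemma Nat.card_subtype_or_of_disjoint {α : Type*} {p q : α → Prop} (hp : {x | p x}.Finite)
    (hq : {x | q x}.Finite) (hpq : ∀ x, p x → ¬ q x) :
    Nat.card {x // p x ∨ q x} = Nat.card {x // p x} + Nat.card {x // q x} :=
  Set.ncard_union_eq (Set.disjoint_left.mpr hpq) hp hq

section Paths

variable {n : ℕ}

lemma ht_zero (P : Fin n → ℤ) : ht P 0 = 0 := by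
  simp [ht]

lemma ht_snoc_of_le (Q : Fin n → ℤ) (x : ℤ) {a : ℕ} (ha : a ≤ n) :
    ht (Fin.snoc Q x : Fin (n + 1) → ℤ) a = ht Q a := by
  simp only [ht, Finset.sum_filter, Fin.sum_univ_castSucc, Fin.snoc_castSucc, Fin.val_castSucc,
    Fin.snoc_last, Fin.val_last]
  rw [if_neg (by omega), add_zero]

lemma ht_snoc_last (Q : Fin n → ℤ) (x : ℤ) :
    ht (Fin.snoc Q x : Fin (n + 1) → ℤ) (n + 1) = ht Q n + x := by
  simp [ht, Finset.sum_filter, Fin.sum_univ_castSucc]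

lemma minHt_le_ht (P : Fin n → ℤ) {a : ℕ} (ha : a ≤ n) : minHt P ≤ ht P a :=
  Finset.inf'_le _ (Finset.mem_range.mpr (by omega))

lemma le_minHt_iff (P : Fin n → ℤ) (m : ℤ) : m ≤ minHt P ↔ ∀ a ≤ n, m ≤ ht P a := by
  simp [minHt]

lemma minHt_of_fin_zero (P : Fin 0 → ℤ) : minHt P = 0 := by
  simp [minHt, ht_zero]

lemma minHt_snoc (Q : Fin n → ℤ) (x : ℤ) :
    minHt (Fin.snoc Q x : Fin (n + 1) → ℤ) = min (ht Q n + x) (minHt Q) := by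
  rw [minHt, minHt, ← ht_snoc_last Q x]
  simp only [Finset.range_add_one (n := n + 1)]
  rw [Finset.inf'_insert Finset.nonempty_range_add_one]
  congr 1
  exact Finset.inf'_congr _ rfl fun a ha => ht_snoc_of_le Q x (Finset.mem_range_succ_iff.mp ha)

lemma isPath_snoc {Q : Fin n → ℤ} (hQ : IsPath Q) {x : ℤ} (hx : x = 1 ∨ x = -1) :
    IsPath (Fin.snoc Q x : Fin (n + 1) → ℤ) := by
  intro l
  induction l using Fin.lastCases with
  | last => simpa using hx
  | cast l => simpa using hQ l

lemma Set.Finite.of_forall_isPath {S : Set (Fin n → ℤ)} (hS : ∀ P ∈ S, IsPath P) : S.Finite :=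
  (Set.Finite.pi (t := fun _ => ({1, -1} : Set ℤ)) fun _ => Set.toFinite _).subset
    fun P hP l _ => hS P hP l

lemma card_isPath_snoc (C : (Fin (n + 1) → ℤ) → Prop) {x : ℤ} (hx : x = 1 ∨ x = -1) :
    Nat.card {Q : Fin n → ℤ // IsPath Q ∧ C (Fin.snoc Q x)}
      = Nat.card {P : Fin (n + 1) → ℤ // (IsPath P ∧ C P) ∧ P (Fin.last n) = x} := by
  change Set.ncard {Q | _} = Set.ncard {P | _}
  rw [← Set.ncard_image_of_injective _ (f := fun Q : Fin n → ℤ => (Fin.snoc Q x : Fin (n + 1) → ℤ))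
    ((Fin.snoc_injective2 (α := fun _ => ℤ)).left x)]
  congr 1
  ext P
  constructor
  · rintro ⟨Q, ⟨hQ, hC⟩, rfl⟩
    exact ⟨⟨isPath_snoc hQ hx, hC⟩, Fin.snoc_last _ _⟩
  · rintro ⟨⟨hP, hC⟩, rfl⟩
    exact ⟨Fin.init P, ⟨fun l => hP _, by rwa [Fin.snoc_init_self]⟩, Fin.snoc_init_self P⟩

lemma card_isPath_succ (C : (Fin (n + 1) → ℤ) → Prop) :
    Nat.card {P : Fin (n + 1) → ℤ // IsPath P ∧ C P}
      = Nat.card {Q : Fin n → ℤ // IsPath Q ∧ C (Fin.snoc Q 1)}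
        + Nat.card {Q : Fin n → ℤ // IsPath Q ∧ C (Fin.snoc Q (-1))} := by
  rw [card_isPath_snoc C (.inl rfl), card_isPath_snoc C (.inr rfl),
    ← Nat.card_subtype_or_of_disjoint (.of_forall_isPath fun _ h => h.1.1)
      (.of_forall_isPath fun _ h => h.1.1) fun _ h1 h2 => by omega]
  exact Nat.card_congr <| Equiv.subtypeEquivRight fun P =>
    ⟨fun h => (h.1 (Fin.last n)).imp (⟨h, ·⟩) (⟨h, ·⟩), fun h => h.elim And.left And.left⟩

end Paths

noncomputable def numNonnegPaths (n : ℕ) (i : ℤ) : ℕ :=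
  Nat.card {P : Fin n → ℤ // IsPath P ∧ (∀ a ≤ n, 0 ≤ ht P a) ∧ ht P n = i}

noncomputable def numPathsWithMin (n : ℕ) (s m : ℤ) : ℕ :=
  Nat.card {P : Fin n → ℤ // IsPath P ∧ ht P n = s ∧ minHt P = m}

lemma numNonnegPaths_zero_eq_numPathsWithMin_zero {s m : ℤ} (hm : m ≤ 0) (hms : m ≤ s) :
    numNonnegPaths 0 (s - 2 * m) = numPathsWithMin 0 s m := by
  refine Nat.card_congr <| Equiv.subtypeEquivRight fun P => ?_
  simp only [← le_minHt_iff, minHt_of_fin_zero, ht_zero]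
  exact and_congr_right fun _ => by omega

lemma numNonnegPaths_of_neg (n : ℕ) {i : ℤ} (hi : i < 0) : numNonnegPaths n i = 0 :=
  Nat.card_eq_zero.mpr <| .inl ⟨fun P => by have := P.2.2.1 n le_rfl; omega⟩

lemma numNonnegPaths_succ (n : ℕ) {i : ℤ} (hi : 0 ≤ i) :
    numNonnegPaths (n + 1) i = numNonnegPaths n (i - 1) + numNonnegPaths n (i + 1) := by
  simp only [numNonnegPaths, ← le_minHt_iff]
  rw [card_isPath_succ]
  congr 1 <;> refine Nat.card_congr <| Equiv.subtypeEquivRight fun Q => and_congr_right fun _ => ?_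
  all_goals
    simp only [minHt_snoc, ht_snoc_last]
    omega

lemma numPathsWithMin_of_pos (n : ℕ) (s : ℤ) {m : ℤ} (hm : 0 < m) : numPathsWithMin n s m = 0 :=
  Nat.card_eq_zero.mpr <| .inl ⟨fun P => by
    have := minHt_le_ht P.1 (Nat.zero_le n); rw [ht_zero] at this; omega⟩

lemma numPathsWithMin_succ_of_lt (n : ℕ) {s m : ℤ} (hms : m < s) :
    numPathsWithMin (n + 1) s m = numPathsWithMin n (s - 1) m + numPathsWithMin n (s + 1) m := by
  rw [numPathsWithMin, card_isPath_succ]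
  congr 1 <;> refine Nat.card_congr <| Equiv.subtypeEquivRight fun Q => and_congr_right fun _ => ?_
  all_goals
    simp only [minHt_snoc, ht_snoc_last]
    omega

lemma numPathsWithMin_succ_self (n : ℕ) (s : ℤ) :
    numPathsWithMin (n + 1) s s
      = numPathsWithMin n (s + 1) s + numPathsWithMin n (s + 1) (s + 1) := by
  have no_up_step : Nat.card {Q : Fin n → ℤ // IsPath Q ∧
      ht (Fin.snoc Q 1 : Fin (n + 1) → ℤ) (n + 1) = s ∧ minHt (Fin.snoc Q 1 : Fin (n + 1) → ℤ) = s}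
      = 0 := Nat.card_eq_zero.mpr <| .inl ⟨fun Q => by
    have hQ := Q.2.2
    have := minHt_le_ht Q.1 le_rfl
    simp only [minHt_snoc, ht_snoc_last] at hQ
    omega⟩
  rw [numPathsWithMin, card_isPath_succ, no_up_step, zero_add, numPathsWithMin, numPathsWithMin,
    ← Nat.card_subtype_or_of_disjoint (.of_forall_isPath fun _ h => h.1)
      (.of_forall_isPath fun _ h => h.1) fun _ h1 h2 => by omega]
  refine Nat.card_congr <| Equiv.subtypeEquivRight fun Q => ?_
  have := minHt_le_ht Q le_rfl
  simp only [minHt_snoc, ht_snoc_last, ← and_or_left]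
  exact and_congr_right fun _ => by omega

theorem numNonnegPaths_eq_numPathsWithMin (n : ℕ) :
    ∀ {s m : ℤ}, m ≤ 0 → m ≤ s → numNonnegPaths n (s - 2 * m) = numPathsWithMin n s m := by
  induction n with
  | zero => exact numNonnegPaths_zero_eq_numPathsWithMin_zero
  | succ n ih =>
    intro s m hm hms
    rcases hms.lt_or_eq with hms | rfl
    · rw [numNonnegPaths_succ n (by omega), numPathsWithMin_succ_of_lt n hms,
        ← ih hm (by omega : m ≤ s - 1), ← ih hm (by omega : m ≤ s + 1)]
      ring_nf
    · rw [numNonnegPaths_succ n (by omega), numPathsWithMin_succ_self,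
        ← ih hm (by omega : m ≤ m + 1), add_comm]
      congr 1
      · ring_nf
      · rcases hm.lt_or_eq with hm | rfl
        · rw [← ih (by omega) le_rfl]
          ring_nf
        · rw [numNonnegPaths_of_neg n (by omega), numPathsWithMin_of_pos n _ (by omega)]

theorem stmt19 (n : ℕ) (s i : ℤ) (hs : 0 ≤ s) (hsi : s ≤ i)
    (hpar : i % 2 = s % 2) :
    Nat.card {P : Fin n → ℤ // IsPath P ∧ (∀ a ≤ n, 0 ≤ ht P a) ∧ ht P n = i} =
    Nat.card {P : Fin n → ℤ // IsPath P ∧ ht P n = s ∧ minHt P = -((i - s) / 2)} := by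
  have hi : i = s - 2 * -((i - s) / 2) := by omega
  conv_lhs => rw [hi]
  exact numNonnegPaths_eq_numPathsWithMin n (by omega) (by omega)
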